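/- Let (X,d) be a metric space, μ a Borel measure on X, N > 1 a real number, and x₀ ∈ X. Assume that 0 < μ(B_{x₀}(r)) < ∞ for all r > 0, that r ↦ μ(B_{x₀}(r))/r^N is nonincreasing on (0,∞), and that μ(B_{x₀}(r))/(ω_N r^N) converges to some θ ≥ 0 as r → ∞. If C ∈ ℝ is a constant such that μ⁺(Ω) ≥ C · μ(Ω)^{(N−1)/N} holds for every bounded Borel set Ω ⊆ X with 0 < μ(Ω) < ∞, then C ≤ N · ω_N^{1/N} · θ^{1/N}. In other words, the constant N ω_N^{1/N} θ^{1/N} in the isoperimetric inequality is sharp. -/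

import Mathlib

open MeasureTheory Metric Filter Set
open scoped Topology ENNReal

/-- The constant `ω_N = π^{N/2} / Γ(1 + N/2)`. -/
noncomputable def omegaN (N : ℝ) : ℝ := Real.pi ^ (N / 2) / Real.Gamma (1 + N / 2)

/-- The `ε`-neighborhood `Ω_ε = {x : ∃ y ∈ Ω, d(x,y) < ε}`. -/
def eNbhd {X : Type*} [MetricSpace X] (Ω : Set X) (ε : ℝ) : Set X :=
  {x | ∃ y ∈ Ω, dist x y < ε}

/-- The Minkowski content `μ⁺(Ω) = liminf_{ε → 0⁺} μ(Ω_ε \ Ω)/ε`. -/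
noncomputable def minkowskiContent {X : Type*} [MetricSpace X] [MeasurableSpace X]
    (μ : Measure X) (Ω : Set X) : ℝ≥0∞ :=
  Filter.liminf (fun ε : ℝ => μ (eNbhd Ω ε \ Ω) / ENNReal.ofReal ε) (𝓝[>] (0 : ℝ))

/-!
Testing the isoperimetric inequality on the balls `B_r = B_{x₀}(r)` gives the bound, once
`μ⁺(B_r)` is estimated by volume growth: `(B_r)_ε ⊆ B_{r+ε}`, and the monotonicity of
`V(s)/s^N`, `V(s) = μ(B_s)`, gives `V(r+ε) - V(r) ≤ V(r) ((r+ε)^N - r^N) / r^N`, whence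
`μ⁺(B_r) ≤ V(r)/r^N · d/dr r^N = N V(r)/r`. Thus `C V(r)^{(N-1)/N} ≤ N V(r)/r`, i.e.
`C ≤ N (V(r)/r^N)^{1/N}`, and `V(r)/r^N → ω_N θ` as `r → ∞`.
-/

lemma omegaN_pos {N : ℝ} (hN : -2 < N) : 0 < omegaN N :=
  div_pos (Real.rpow_pos_of_pos Real.pi_pos _) (Real.Gamma_pos_of_pos (by linarith))

lemma tendsto_rpow_slope_nhdsGT {r : ℝ} (hr : 0 < r) (N : ℝ) :
    Tendsto (fun ε : ℝ => ((r + ε) ^ N - r ^ N) / ε) (𝓝[>] 0) (𝓝 (N * r ^ (N - 1))) := by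
  refine (Real.hasDerivAt_rpow_const (Or.inl hr.ne')).tendsto_slope_zero_right.congr fun ε => ?_
  rw [smul_eq_mul, inv_mul_eq_div]

section MetricMeasure

variable {X : Type*} [MetricSpace X]

lemma eNbhd_ball_subset_ball (x : X) (r ε : ℝ) : eNbhd (ball x r) ε ⊆ ball x (r + ε) := by
  rintro z ⟨y, hy, hzy⟩
  calc dist z x ≤ dist z y + dist y x := dist_triangle _ _ _
    _ < r + ε := by linarith [mem_ball.mp hy]

variable [MeasurableSpace X] [OpensMeasurableSpace X] {μ : Measure X}

lemma measure_eNbhd_ball_diff_le {x : X} {r ε : ℝ} (hε : 0 ≤ ε) (hr : μ (ball x r) ≠ ⊤) :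
    μ (eNbhd (ball x r) ε \ ball x r) ≤ μ (ball x (r + ε)) - μ (ball x r) :=
  calc μ (eNbhd (ball x r) ε \ ball x r) ≤ μ (ball x (r + ε) \ ball x r) :=
        measure_mono (sdiff_subset_sdiff_left (eNbhd_ball_subset_ball x r ε))
    _ = μ (ball x (r + ε)) - μ (ball x r) :=
        measure_sdiff (ball_subset_ball (by linarith)) measurableSet_ball.nullMeasurableSet hr

lemma minkowskiContent_ball_le {x : X} {r N : ℝ} (hr : 0 < r)
    (hfin : ∀ s, r ≤ s → μ (ball x s) ≠ ⊤)
    (hgrowth : ∀ s, r ≤ s →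
      (μ (ball x s)).toReal / s ^ N ≤ (μ (ball x r)).toReal / r ^ N) :
    minkowskiContent μ (ball x r) ≤ ENNReal.ofReal (N * (μ (ball x r)).toReal / r) := by
  set V : ℝ → ℝ := fun s => (μ (ball x s)).toReal
  have hrN : 0 < r ^ N := Real.rpow_pos_of_pos hr N
  have hshell : ∀ᶠ ε in 𝓝[>] (0 : ℝ), μ (eNbhd (ball x r) ε \ ball x r) / ENNReal.ofReal ε
      ≤ ENNReal.ofReal (V r / r ^ N * (((r + ε) ^ N - r ^ N) / ε)) := by
    filter_upwards [self_mem_nhdsWithin] with ε (hε : 0 < ε)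
    have hVε : V (r + ε) ≤ V r / r ^ N * (r + ε) ^ N :=
      (div_le_iff₀ (Real.rpow_pos_of_pos (by linarith) N)).mp (hgrowth _ (by linarith))
    have hdiff : V (r + ε) - V r ≤ V r / r ^ N * ((r + ε) ^ N - r ^ N) := by
      rw [mul_sub, div_mul_cancel₀ _ hrN.ne']
      linarith
    have hmeas : μ (eNbhd (ball x r) ε \ ball x r) ≤ ENNReal.ofReal (V (r + ε) - V r) := by
      rw [ENNReal.ofReal_sub _ ENNReal.toReal_nonneg, ENNReal.ofReal_toReal (hfin _ (by linarith)),
        ENNReal.ofReal_toReal (hfin r le_rfl)]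
      exact measure_eNbhd_ball_diff_le hε.le (hfin r le_rfl)
    calc μ (eNbhd (ball x r) ε \ ball x r) / ENNReal.ofReal ε
        ≤ ENNReal.ofReal (V (r + ε) - V r) / ENNReal.ofReal ε := by gcongr
      _ = ENNReal.ofReal ((V (r + ε) - V r) / ε) := (ENNReal.ofReal_div_of_pos hε).symm
      _ ≤ ENNReal.ofReal (V r / r ^ N * (((r + ε) ^ N - r ^ N) / ε)) := by
        rw [← mul_div_assoc]
        gcongr
  have hlim : Tendsto (fun ε : ℝ => ENNReal.ofReal (V r / r ^ N * (((r + ε) ^ N - r ^ N) / ε)))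
      (𝓝[>] 0) (𝓝 (ENNReal.ofReal (N * V r / r))) := by
    have hderiv : V r / r ^ N * (N * r ^ (N - 1)) = N * V r / r := by
      rw [Real.rpow_sub_one hr.ne']
      field_simp
    rw [← hderiv]
    exact ENNReal.tendsto_ofReal (tendsto_const_nhds.mul (tendsto_rpow_slope_nhdsGT hr N))
  exact (liminf_le_liminf hshell).trans_eq hlim.liminf_eq

end MetricMeasure

lemma le_mul_div_rpow_one_div_of_ofReal_mul_rpow_le {C V r N : ℝ} (hN : 0 < N) (hV : 0 < V)
    (hr : 0 < r)
    (h : ENNReal.ofReal C * ENNReal.ofReal V ^ ((N - 1) / N) ≤ ENNReal.ofReal (N * V / r)) :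
    C ≤ N * (V / r ^ N) ^ (1 / N) := by
  have hVp : 0 < V ^ ((N - 1) / N) := Real.rpow_pos_of_pos hV _
  rw [ENNReal.ofReal_rpow_of_pos hV, ← ENNReal.ofReal_mul' hVp.le,
    ENNReal.ofReal_le_ofReal_iff (by positivity)] at h
  have hVpow : V ^ (1 / N) * V ^ ((N - 1) / N) = V := by
    rw [← Real.rpow_add hV, ← add_div, add_sub_cancel, div_self hN.ne', Real.rpow_one]
  have hsplit : N * (V / r ^ N) ^ (1 / N) * V ^ ((N - 1) / N) = N * V / r :=
    calc N * (V / r ^ N) ^ (1 / N) * V ^ ((N - 1) / N)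
        = N * (V ^ (1 / N) * V ^ ((N - 1) / N)) / (r ^ N) ^ (1 / N) := by
          rw [Real.div_rpow hV.le (Real.rpow_nonneg hr.le N)]
          ring
      _ = N * V / r := by
          rw [hVpow, ← Real.rpow_mul hr.le, mul_one_div_cancel hN.ne', Real.rpow_one]
  rwa [← le_div_iff₀ hVp, ← hsplit, mul_div_cancel_right₀ _ hVp.ne'] at h

/-- Sharpness of the isoperimetric constant: if `μ⁺(Ω) ≥ C μ(Ω)^{(N-1)/N}` holds for
all bounded Borel sets `Ω` of positive finite measure, then
`C ≤ N ω_N^{1/N} θ^{1/N}`. -/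
theorem isoperimetric_constant_sharp
    {X : Type*} [MetricSpace X] [MeasurableSpace X] [BorelSpace X]
    (μ : Measure X) (N : ℝ) (hN : 1 < N) (x₀ : X)
    (hpos : ∀ r : ℝ, 0 < r → 0 < μ (Metric.ball x₀ r))
    (hfin : ∀ r : ℝ, 0 < r → μ (Metric.ball x₀ r) < ⊤)
    (hBG : ∀ r₁ r₂ : ℝ, 0 < r₁ → r₁ ≤ r₂ →
      (μ (Metric.ball x₀ r₂)).toReal / r₂ ^ N ≤ (μ (Metric.ball x₀ r₁)).toReal / r₁ ^ N)
    (θ : ℝ) (hθ : 0 ≤ θ)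
    (hAVR : Tendsto (fun r : ℝ => (μ (Metric.ball x₀ r)).toReal / (omegaN N * r ^ N))
      atTop (𝓝 θ))
    (C : ℝ)
    (hC : ∀ Ω : Set X, Bornology.IsBounded Ω → MeasurableSet Ω →
      0 < μ Ω → μ Ω < ⊤ →
      ENNReal.ofReal C * μ Ω ^ ((N - 1) / N) ≤ minkowskiContent μ Ω) :
    C ≤ N * omegaN N ^ (1 / N) * θ ^ (1 / N) := by
  have hNpos : 0 < N := by linarith
  have hω : 0 < omegaN N := omegaN_pos (by linarith)
  have hball : ∀ r, 0 < r → C ≤ N * ((μ (ball x₀ r)).toReal / r ^ N) ^ (1 / N) := by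
    intro r hr
    have hmink := minkowskiContent_ball_le (μ := μ) (x := x₀) (N := N) hr
      (fun s hs => (hfin s (hr.trans_le hs)).ne) (fun s hs => hBG r s hr hs)
    refine le_mul_div_rpow_one_div_of_ofReal_mul_rpow_le hNpos
      (ENNReal.toReal_pos (hpos r hr).ne' (hfin r hr).ne) hr ?_
    rw [ENNReal.ofReal_toReal (hfin r hr).ne]
    exact (hC _ isBounded_ball measurableSet_ball (hpos r hr) (hfin r hr)).trans hmink
  have hgrowth : Tendsto (fun r => (μ (ball x₀ r)).toReal / r ^ N) atTop (𝓝 (omegaN N * θ)) :=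
    (hAVR.const_mul (omegaN N)).congr fun r => by field_simp
  have hlim : Tendsto (fun r => N * ((μ (ball x₀ r)).toReal / r ^ N) ^ (1 / N)) atTop
      (𝓝 (N * (omegaN N * θ) ^ (1 / N))) :=
    (hgrowth.rpow_const (Or.inr (one_div_nonneg.mpr hNpos.le))).const_mul N
  calc C ≤ N * (omegaN N * θ) ^ (1 / N) :=
        ge_of_tendsto hlim ((eventually_gt_atTop 0).mono hball)
    _ = N * omegaN N ^ (1 / N) * θ ^ (1 / N) := by rw [Real.mul_rpow hω.le hθ, mul_assoc]
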